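/- Let g(x) = ⟨x, Qx⟩/2 - ⟨b, x⟩ with Q a symmetric positive-definite M-matrix, and let x* = argmin_{x ≥ 0} g(x). Suppose x ≥ 0 satisfies, for some S ⊆ [n]: xᵢ = 0 for i ∉ S and ∇ᵢg(x) ≤ 0 for i ∈ S, and moreover the minimizer x^{*,C} over C = span{eⱼ : j ∈ S} ∩ ℝⁿ_{≥0} satisfies x^{*,C}ⱼ > 0 exactly for j ∈ S. Then every coordinate i ∉ S with ∇ᵢg(x) < 0 belongs to supp(x*). -/

import Mathlib

open Matrix

/-- The quadratic objective `g x = ⟨x, Qx⟩/2 - ⟨b, x⟩`. -/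
noncomputable def quadObj {n : ℕ} (Q : Matrix (Fin n) (Fin n) ℝ) (b x : Fin n → ℝ) : ℝ :=
  (1/2) * (x ⬝ᵥ Q.mulVec x) - b ⬝ᵥ x

lemma symm_dot {n : ℕ} {Q : Matrix (Fin n) (Fin n) ℝ} (hQ : Q.IsSymm) (u v : Fin n → ℝ) :
    u ⬝ᵥ Q.mulVec v = v ⬝ᵥ Q.mulVec u := by
  rw [Matrix.dotProduct_mulVec, dotProduct_comm, ← Matrix.mulVec_transpose, hQ]

lemma pd_dot {n : ℕ} {Q : Matrix (Fin n) (Fin n) ℝ} (hQpd : Q.PosDef)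
    (u : Fin n → ℝ) (hu : u ≠ 0) : 0 < u ⬝ᵥ Q.mulVec u := by
  have := hQpd.dotProduct_mulVec_pos hu
  simpa using this

lemma pd_diag {n : ℕ} {Q : Matrix (Fin n) (Fin n) ℝ} (hQpd : Q.PosDef) (i : Fin n) :
    0 < Q i i := by
  have h := pd_dot hQpd (Pi.single i 1) (by
    intro h
    have := congrFun h i
    simp [Pi.single_eq_same] at this)
  simpa [single_dotProduct, Matrix.mulVec_single] using h

lemma quad_expand {n : ℕ} {Q : Matrix (Fin n) (Fin n) ℝ} (hQ : Q.IsSymm) (b x v : Fin n → ℝ) :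
    quadObj Q b (x + v)
      = quadObj Q b x + v ⬝ᵥ (Q.mulVec x - b) + (1/2) * (v ⬝ᵥ Q.mulVec v) := by
  have h : v ⬝ᵥ Q.mulVec x = x ⬝ᵥ Q.mulVec v := symm_dot hQ v x
  simp only [quadObj, Matrix.mulVec_add, dotProduct_add, add_dotProduct,
    dotProduct_sub, sub_dotProduct]
  rw [h, dotProduct_comm v b]
  ring

/-- KKT: gradient of the global nonneg minimizer is nonnegative. -/
lemma kkt_nonneg {n : ℕ} {Q : Matrix (Fin n) (Fin n) ℝ} {b : Fin n → ℝ}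
    (hQ : Q.IsSymm) (hQpd : Q.PosDef) {xstar : Fin n → ℝ}
    (hmem : ∀ i, 0 ≤ xstar i)
    (hmin : ∀ z : Fin n → ℝ, (∀ i, 0 ≤ z i) → quadObj Q b xstar ≤ quadObj Q b z) :
    ∀ i, 0 ≤ (Q.mulVec xstar - b) i := by
  intro i
  by_contra hneg
  push_neg at hneg
  set g := (Q.mulVec xstar - b) i with hg
  have hQii : 0 < Q i i := pd_diag hQpd i
  set t : ℝ := -g / Q i i with ht
  have htpos : 0 < t := div_pos (neg_pos.mpr hneg) hQii
  set v : Fin n → ℝ := Pi.single i t with hv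
  have hz : ∀ j, 0 ≤ xstar j + v j := by
    intro j
    rcases eq_or_ne j i with rfl | hne
    · have := hmem j
      simp only [hv, Pi.single_eq_same]
      linarith
    · simp [hv, Pi.single_eq_of_ne hne, hmem j]
  have hle := hmin (xstar + v) hz
  rw [quad_expand hQ b xstar v] at hle
  have h1 : v ⬝ᵥ (Q.mulVec xstar - b) = t * g := by
    simp only [hv, single_dotProduct, hg, Pi.sub_apply]
  have h2 : v ⬝ᵥ Q.mulVec v = t * t * Q i i := by
    simp only [hv, single_dotProduct, Matrix.mulVec_single, Pi.smul_apply, op_smul_eq_mul,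
      Matrix.col_apply]
    ring
  rw [h1, h2] at hle
  have htQ : t * Q i i = -g := by
    rw [ht, div_mul_cancel₀ _ hQii.ne']
  nlinarith [mul_pos htpos (neg_pos.mpr hneg)]

/-- M-matrix comparison lemma: if `(Qd)ᵢ ≤ 0` wherever `dᵢ > 0`, then `d ≤ 0`. -/
lemma mmatrix_comparison {n : ℕ} {Q : Matrix (Fin n) (Fin n) ℝ}
    (hQpd : Q.PosDef) (hM : ∀ i j : Fin n, i ≠ j → Q i j ≤ 0)
    (d : Fin n → ℝ) (hd : ∀ i, 0 < d i → (Q.mulVec d) i ≤ 0) :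
    ∀ i, d i ≤ 0 := by
  set u : Fin n → ℝ := fun i => max (d i) 0 with hu
  set w : Fin n → ℝ := fun i => max (-(d i)) 0 with hw
  have huw : u - w = d := by
    funext i
    rcases le_or_gt (d i) 0 with h | h
    · simp [hu, hw, max_eq_right h, max_eq_left (by linarith : (0:ℝ) ≤ -d i)]
    · simp [hu, hw, max_eq_left h.le, max_eq_right (by linarith : -d i ≤ 0)]
  have hunn : ∀ i, 0 ≤ u i := fun i => le_max_right _ _
  have hwnn : ∀ i, 0 ≤ w i := fun i => le_max_right _ _
  have hud : u ⬝ᵥ Q.mulVec d ≤ 0 := by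
    apply Finset.sum_nonpos
    intro i _
    rcases le_or_gt (d i) 0 with h | h
    · simp [hu, max_eq_right h]
    · exact mul_nonpos_of_nonneg_of_nonpos (hunn i) (hd i h)
  have huQw : u ⬝ᵥ Q.mulVec w ≤ 0 := by
    apply Finset.sum_nonpos
    intro i _
    rcases le_or_gt (d i) 0 with h | h
    · simp [hu, max_eq_right h]
    · apply mul_nonpos_of_nonneg_of_nonpos (hunn i)
      simp only [Matrix.mulVec, dotProduct]
      apply Finset.sum_nonpos
      intro j _
      rcases eq_or_ne j i with rfl | hne
      · simp [hw, max_eq_right (by linarith : -d j ≤ 0)]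
      · exact mul_nonpos_of_nonpos_of_nonneg (hM i j (Ne.symm hne)) (hwnn j)
  have hu0 : u = 0 := by
    by_contra hne
    have hpos := pd_dot hQpd u hne
    have : u ⬝ᵥ Q.mulVec u = u ⬝ᵥ Q.mulVec d + u ⬝ᵥ Q.mulVec w := by
      rw [← huw, Matrix.mulVec_sub, dotProduct_sub]
      ring
    linarith
  intro i
  have := congrFun hu0 i
  simp only [hu, Pi.zero_apply] at this
  by_contra h
  push_neg at h
  rw [max_eq_left h.le] at this
  linarith

/-- Lemma 10, early termination: suppose `x ≥ 0` vanishes off `S`, has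
`∇g(x) ≤ 0` on `S`, and the minimizer `x^{*,C}` over `C = span{eⱼ : j ∈ S} ∩ ℝⁿ₊`
is positive exactly on `S`. Then every `i ∉ S` with `∇ᵢg(x) < 0` lies in the support
of the global nonnegative minimizer `x*`. -/
theorem stmt_10 (n : ℕ) (Q : Matrix (Fin n) (Fin n) ℝ) (b : Fin n → ℝ)
    (hQsymm : Q.IsSymm) (hQpd : Q.PosDef)
    (hM : ∀ i j : Fin n, i ≠ j → Q i j ≤ 0)
    (S : Set (Fin n)) (x : Fin n → ℝ)
    (hxnonneg : ∀ i, 0 ≤ x i)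
    (hxsupp : ∀ i ∉ S, x i = 0)
    (hxgrad : ∀ i ∈ S, (Q.mulVec x - b) i ≤ 0)
    (xC : Fin n → ℝ)
    (hxCmem : (∀ i, 0 ≤ xC i) ∧ ∀ i ∉ S, xC i = 0)
    (hxCmin : ∀ z : Fin n → ℝ, ((∀ i, 0 ≤ z i) ∧ ∀ i ∉ S, z i = 0) →
      quadObj Q b xC ≤ quadObj Q b z)
    (hxCpos : ∀ j : Fin n, 0 < xC j ↔ j ∈ S)
    (xstar : Fin n → ℝ)
    (hxstarmem : ∀ i, 0 ≤ xstar i)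
    (hxstarmin : ∀ z : Fin n → ℝ, (∀ i, 0 ≤ z i) →
      quadObj Q b xstar ≤ quadObj Q b z) :
    ∀ i ∉ S, (Q.mulVec x - b) i < 0 → 0 < xstar i := by
  have hkkt : ∀ i, 0 ≤ (Q.mulVec xstar - b) i :=
    kkt_nonneg hQsymm hQpd hxstarmem hxstarmin
  -- x ≤ xstar via the M-matrix comparison lemma applied to d = x - xstar
  have hle : ∀ i, x i ≤ xstar i := by
    have := mmatrix_comparison hQpd hM (x - xstar) ?_
    · intro i
      have := this i
      simp only [Pi.sub_apply] at this
      linarith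
    · intro i hi
      simp only [Pi.sub_apply] at hi
      have hxipos : 0 < x i := by linarith [hxstarmem i]
      have hiS : i ∈ S := by
        by_contra hns
        rw [hxsupp i hns] at hxipos
        exact lt_irrefl 0 hxipos
      have h1 : (Q.mulVec x - b) i ≤ 0 := hxgrad i hiS
      have h2 : 0 ≤ (Q.mulVec xstar - b) i := hkkt i
      have : Q.mulVec (x - xstar) i = (Q.mulVec x - b) i - (Q.mulVec xstar - b) i := by
        rw [Matrix.mulVec_sub]
        simp
      rw [this]
      linarith
  intro i hiS hgrad
  by_contra hpos
  push_neg at hpos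
  have hzero : xstar i = 0 := le_antisymm hpos (hxstarmem i)
  have hxi : x i = 0 := hxsupp i hiS
  -- (Q xstar) i ≤ (Q x) i
  have hQle : Q.mulVec xstar i ≤ Q.mulVec x i := by
    have : Q.mulVec xstar i - Q.mulVec x i = ∑ j, Q i j * (xstar j - x j) := by
      simp [Matrix.mulVec, dotProduct, mul_sub, Finset.sum_sub_distrib]
    have hsum : ∑ j, Q i j * (xstar j - x j) ≤ 0 := by
      apply Finset.sum_nonpos
      intro j _
      rcases eq_or_ne j i with rfl | hne
      · rw [hzero, hxi]
        simp
      · exact mul_nonpos_of_nonpos_of_nonneg (hM i j (Ne.symm hne)) (by linarith [hle j])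
    linarith
  have := hkkt i
  simp only [Pi.sub_apply] at this hgrad
  linarith
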